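/- Let P be the permutation matrix of p ∈ S_N with N = 2^k, and define P̌ := I₂ ⊗ (H^{⊗2k}·P^{⊗2}·H^{⊗2k}). Then the log-Hadamard representation satisfies widehat(P A Pᵀ) = P̌ · widehat(A) · P̌ᵀ for every symmetric ℤ₂-matrix A. -/

import Mathlib

open Matrix Kronecker

/-- Vertices of a graph with N = 2^k nodes, encoded as bitstrings of k qubits. -/
abbrev Vtx (k : ℕ) := Fin k → Fin 2

/-- The 2×2 Hadamard matrix. -/
noncomputable def H2 : Matrix (Fin 2) (Fin 2) ℂ :=
  ((Real.sqrt 2 : ℂ))⁻¹ • !![1, 1; 1, -1]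

/-- h(A) = iπ·∑_{i,j} A_{ij} |i,j⟩⟨i,j|. -/
noncomputable def hmat {k : ℕ} (A : Matrix (Vtx k) (Vtx k) (ZMod 2)) :
    Matrix (Vtx k × Vtx k) (Vtx k × Vtx k) ℂ :=
  Matrix.diagonal fun p => Complex.I * (Real.pi : ℂ) * ((A p.1 p.2).val : ℂ)

/-- cexp(K) = I ⊕ exp(K) = |0⟩⟨0|⊗I + |1⟩⟨1|⊗exp(K). -/
noncomputable def cexpM {k : ℕ} (K : Matrix (Vtx k × Vtx k) (Vtx k × Vtx k) ℂ) :
    Matrix (Fin 2 × (Vtx k × Vtx k)) (Fin 2 × (Vtx k × Vtx k)) ℂ :=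
  (Matrix.single 0 0 1) ⊗ₖ (1 : Matrix (Vtx k × Vtx k) (Vtx k × Vtx k) ℂ)
    + (Matrix.single 1 1 1) ⊗ₖ NormedSpace.exp K

/-- The Hadamard transform H^{⊗(2k+1)} on the (2k+1)-qubit space
ℂ² ⊗ (ℂ^{2^k} ⊗ ℂ^{2^k}), given by its entrywise tensor-power formula. -/
noncomputable def Hfull (k : ℕ) :
    Matrix (Fin 2 × (Vtx k × Vtx k)) (Fin 2 × (Vtx k × Vtx k)) ℂ :=
  Matrix.of fun p q =>
    H2 p.1 q.1 * (∏ t, H2 (p.2.1 t) (q.2.1 t)) * ∏ t, H2 (p.2.2 t) (q.2.2 t)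

/-- The log-Hadamard representation Â = H^{⊗(2k+1)}·cexp(h(A))·H^{⊗(2k+1)}. -/
noncomputable def hatRep {k : ℕ} (A : Matrix (Vtx k) (Vtx k) (ZMod 2)) :
    Matrix (Fin 2 × (Vtx k × Vtx k)) (Fin 2 × (Vtx k × Vtx k)) ℂ :=
  Hfull k * cexpM (hmat A) * Hfull k

/-- The complex permutation matrix P = ∑ᵢ |p(i)⟩⟨i| of p ∈ S_N. -/
noncomputable def permMatC {k : ℕ} (p : Equiv.Perm (Vtx k)) : Matrix (Vtx k) (Vtx k) ℂ :=
  Matrix.of fun i j => if i = p j then 1 else 0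

/-- The ℤ₂ permutation matrix P = ∑ᵢ |p(i)⟩⟨i| of p ∈ S_N. -/
def permMatZ {k : ℕ} (p : Equiv.Perm (Vtx k)) : Matrix (Vtx k) (Vtx k) (ZMod 2) :=
  Matrix.of fun i j => if i = p j then 1 else 0

/-- The Hadamard transform H^{⊗2k} on ℂ^{2^k} ⊗ ℂ^{2^k}. -/
noncomputable def HVV (k : ℕ) : Matrix (Vtx k × Vtx k) (Vtx k × Vtx k) ℂ :=
  Matrix.of fun a b => (∏ t, H2 (a.1 t) (b.1 t)) * ∏ t, H2 (a.2 t) (b.2 t)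

/-- P̌ := I₂ ⊗ (H^{⊗2k}·P^{⊗2}·H^{⊗2k}). -/
noncomputable def checkRep {k : ℕ} (p : Equiv.Perm (Vtx k)) :
    Matrix (Fin 2 × (Vtx k × Vtx k)) (Fin 2 × (Vtx k × Vtx k)) ℂ :=
  (1 : Matrix (Fin 2) (Fin 2) ℂ) ⊗ₖ (HVV k * (permMatC p ⊗ₖ permMatC p) * HVV k)

section Helpers

variable {k : ℕ}

lemma H2_comm (i j : Fin 2) : H2 i j = H2 j i := by
  fin_cases i <;> fin_cases j <;> simp [H2]

lemma H2_mul_H2 : H2 * H2 = 1 := by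
  have h2 : ((Real.sqrt 2 : ℂ))⁻¹ * (Real.sqrt 2 : ℂ)⁻¹ * 2 = 1 := by
    rw [← mul_inv]
    norm_cast
    rw [Real.mul_self_sqrt (by norm_num)]
    norm_num
  ext i j
  fin_cases i <;> fin_cases j <;>
    simp [H2, Matrix.mul_apply, Fin.sum_univ_two, Matrix.one_apply] <;> ring_nf <;>
    linear_combination h2

/-- A general complex permutation matrix. -/
noncomputable def permM {n : Type*} [DecidableEq n] (σ : Equiv.Perm n) : Matrix n n ℂ :=
  Matrix.of fun i j => if i = σ j then 1 else 0

lemma permM_refl {n : Type*} [DecidableEq n] : permM (Equiv.refl n) = 1 := by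
  ext i j; simp [permM, Matrix.one_apply]; congr

lemma permM_kron {n m : Type*} [DecidableEq n] [DecidableEq m] (σ : Equiv.Perm n)
    (τ : Equiv.Perm m) : permM σ ⊗ₖ permM τ = permM (σ.prodCongr τ) := by
  ext ⟨i, j⟩ ⟨i', j'⟩
  by_cases h1 : i = σ i' <;> by_cases h2 : j = τ j' <;>
    simp [permM, Prod.ext_iff, h1, h2]

lemma permM_conj {n : Type*} [Fintype n] [DecidableEq n] (σ : Equiv.Perm n) (d : n → ℂ) :
    permM σ * Matrix.diagonal d * (permM σ)ᵀ = Matrix.diagonal (fun i => d (σ.symm i)) := by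
  ext i j
  rw [Matrix.mul_apply]
  simp only [Matrix.mul_diagonal, Matrix.transpose_apply, permM, Matrix.of_apply,
    ← Equiv.symm_apply_eq, ite_mul, mul_ite, one_mul, zero_mul, mul_zero, mul_one]
  rw [Finset.sum_ite_eq Finset.univ (σ.symm j)]
  simp only [Finset.mem_univ, if_true, Matrix.diagonal_apply]
  by_cases h : i = j
  · simp [h]
  · have h1 : ¬ σ.symm i = σ.symm j := fun hc => h (σ.symm.injective hc)
    have h2 : ¬ σ.symm j = σ.symm i := fun hc => h1 hc.symm
    simp [h, h1, h2]

/-- Single-register Hadamard transform. -/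
noncomputable def HV (k : ℕ) : Matrix (Vtx k) (Vtx k) ℂ :=
  Matrix.of fun a b => ∏ t, H2 (a t) (b t)

lemma HV_mul_HV : HV k * HV k = 1 := by
  ext a b
  rw [Matrix.mul_apply]
  simp only [HV, Matrix.of_apply, ← Finset.prod_mul_distrib]
  have hswap := Finset.prod_univ_sum (fun _ : Fin k => (Finset.univ : Finset (Fin 2)))
    (fun t c => H2 (a t) c * H2 c (b t))
  rw [Fintype.piFinset_univ] at hswap
  rw [← hswap]
  have : ∀ t : Fin k, (∑ x : Fin 2, H2 (a t) x * H2 x (b t)) = (1 : Matrix (Fin 2) (Fin 2) ℂ) (a t) (b t) := by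
    intro t
    rw [← Matrix.mul_apply, H2_mul_H2]
  rw [Finset.prod_congr rfl (fun t _ => this t)]
  simp only [Matrix.one_apply]
  rw [Finset.prod_boole]
  simp only [Finset.mem_univ, forall_true_left, Matrix.one_apply]
  congr 1
  simp [funext_iff]

lemma HV_transpose : (HV k)ᵀ = HV k := by
  ext a b
  simp only [Matrix.transpose_apply, HV, Matrix.of_apply]
  exact Finset.prod_congr rfl (fun t _ => H2_comm _ _)

lemma HVV_eq : HVV k = HV k ⊗ₖ HV k := rfl

lemma HVV_mul_HVV : HVV k * HVV k = 1 := by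
  rw [HVV_eq, ← Matrix.mul_kronecker_mul, HV_mul_HV, Matrix.one_kronecker_one]

lemma HVV_transpose : (HVV k)ᵀ = HVV k := by
  rw [HVV_eq, ← Matrix.kroneckerMap_transpose, HV_transpose]

lemma Hfull_eq : Hfull k = H2 ⊗ₖ HVV k := by
  ext ⟨b, x⟩ ⟨c, y⟩
  simp [Hfull, HVV, Matrix.kroneckerMap_apply, mul_assoc]

/-- exponential of a diagonal complex matrix -/
lemma exp_diag {n : Type*} [Fintype n] [DecidableEq n] (v : n → ℂ) :
    NormedSpace.exp (Matrix.diagonal v) = Matrix.diagonal fun i => Complex.exp (v i) := by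
  rw [Matrix.exp_diagonal, Pi.exp_def]
  simp [Complex.exp_eq_exp_ℂ]

/-- diagonal entries of `cexpM (hmat A)` -/
noncomputable def dvec (A : Matrix (Vtx k) (Vtx k) (ZMod 2)) :
    Fin 2 × (Vtx k × Vtx k) → ℂ :=
  fun x => if x.1 = 1 then
    Complex.exp (Complex.I * (Real.pi : ℂ) * ((A x.2.1 x.2.2).val : ℂ)) else 1

lemma cexp_diag (A : Matrix (Vtx k) (Vtx k) (ZMod 2)) :
    cexpM (hmat A) = Matrix.diagonal (dvec A) := by
  rw [cexpM, hmat, exp_diag]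
  ext ⟨b, x⟩ ⟨c, y⟩
  fin_cases b <;> fin_cases c <;>
    simp [Matrix.kroneckerMap_apply, Matrix.single, Matrix.diagonal_apply,
      Matrix.one_apply, dvec, Prod.ext_iff]

lemma conjZ_apply (p : Equiv.Perm (Vtx k)) (A : Matrix (Vtx k) (Vtx k) (ZMod 2))
    (i j : Vtx k) : (permMatZ p * A * (permMatZ p)ᵀ) i j = A (p.symm i) (p.symm j) := by
  rw [Matrix.mul_apply]
  simp only [Matrix.mul_apply, Matrix.transpose_apply, permMatZ, Matrix.of_apply,
    ← Equiv.symm_apply_eq, ite_mul, mul_ite, one_mul, zero_mul, mul_zero, mul_one,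
    Finset.sum_ite_eq, Finset.mem_univ, if_true]

end Helpers

section Main

variable {k : ℕ}

lemma permMatC_eq (p : Equiv.Perm (Vtx k)) : permMatC p = permM p := rfl

lemma permM_sigma (p : Equiv.Perm (Vtx k)) :
    permM ((Equiv.refl (Fin 2)).prodCongr (p.prodCongr p)) =
      (1 : Matrix (Fin 2) (Fin 2) ℂ) ⊗ₖ (permM p ⊗ₖ permM p) := by
  rw [← permM_refl, permM_kron, permM_kron]

lemma hQ (p : Equiv.Perm (Vtx k)) :
    checkRep p * Hfull k =
      Hfull k * permM ((Equiv.refl (Fin 2)).prodCongr (p.prodCongr p)) := by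
  rw [permM_sigma, Hfull_eq, checkRep, permMatC_eq,
    ← Matrix.mul_kronecker_mul, ← Matrix.mul_kronecker_mul, one_mul, mul_one,
    mul_assoc, HVV_mul_HVV, mul_one]

lemma hQT (p : Equiv.Perm (Vtx k)) :
    Hfull k * (checkRep p)ᵀ =
      (permM ((Equiv.refl (Fin 2)).prodCongr (p.prodCongr p)))ᵀ * Hfull k := by
  rw [permM_sigma, Hfull_eq, checkRep, permMatC_eq]
  rw [← Matrix.kroneckerMap_transpose, ← Matrix.kroneckerMap_transpose,
    Matrix.transpose_one, Matrix.transpose_mul, Matrix.transpose_mul, HVV_transpose]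
  rw [← Matrix.mul_kronecker_mul, ← Matrix.mul_kronecker_mul, one_mul, mul_one,
    ← mul_assoc, ← mul_assoc, HVV_mul_HVV, one_mul]

end Main

/-- widehat(P A Pᵀ) = P̌ · Â · P̌ᵀ for every symmetric ℤ₂-matrix A. -/
theorem stmt_13 {k : ℕ} (p : Equiv.Perm (Vtx k))
    (A : Matrix (Vtx k) (Vtx k) (ZMod 2)) (hA : A.IsSymm) :
    hatRep (permMatZ p * A * (permMatZ p)ᵀ) =
      checkRep p * hatRep A * (checkRep p)ᵀ := by
  set σ : Equiv.Perm (Fin 2 × (Vtx k × Vtx k)) :=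
    (Equiv.refl (Fin 2)).prodCongr (p.prodCongr p) with hσ
  have hdv : dvec (permMatZ p * A * (permMatZ p)ᵀ) = fun x => dvec A (σ.symm x) := by
    funext x
    obtain ⟨b, i, j⟩ := x
    have hsymm : σ.symm (b, i, j) = (b, p.symm i, p.symm j) := by
      simp [hσ, Equiv.prodCongr_symm]
    rw [hsymm]
    simp [dvec, conjZ_apply]
  have key : cexpM (hmat (permMatZ p * A * (permMatZ p)ᵀ)) =
      permM σ * cexpM (hmat A) * (permM σ)ᵀ := by
    rw [cexp_diag, cexp_diag, permM_conj, hdv]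
  calc hatRep (permMatZ p * A * (permMatZ p)ᵀ)
      = Hfull k * (permM σ * cexpM (hmat A) * (permM σ)ᵀ) * Hfull k := by
        rw [hatRep, key]
    _ = (Hfull k * permM σ) * cexpM (hmat A) * ((permM σ)ᵀ * Hfull k) := by
        simp only [Matrix.mul_assoc]
    _ = (checkRep p * Hfull k) * cexpM (hmat A) * (Hfull k * (checkRep p)ᵀ) := by
        rw [hQ, hQT]
    _ = checkRep p * hatRep A * (checkRep p)ᵀ := by
        rw [hatRep]
        simp only [Matrix.mul_assoc]
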